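/- arXiv:1704.00499 — 2 statements merged into one kernel-verified Lean document; each statement's English description precedes it below -/
import Mathlib

section
/- The kernel R₀(x,y,k) = (i/(4k³))(e^{ik|x-y|} − e^{ik(x+y)} + i e^{-k|x-y|} − i e^{-k(x+y)}) is real-valued for all x, y ≥ 0 whenever k lies on the line e^{iπ/4}ℝ, i.e. k = t e^{iπ/4} with t ∈ ℝ \ {0}. -/
open Complex

/-- The free resolvent kernel of `∂⁴` on the half-line with `y(0)=y''(0)=0`. -/
noncomputable def R0 (x y : ℝ) (k : ℂ) : ℂ :=
  (I / (4 * k ^ 3)) * (Complex.exp (I * k * |x - y|) - Complex.exp (I * k * (x + y))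
    + I * Complex.exp (-k * |x - y|) - I * Complex.exp (-k * (x + y)))

lemma conj_k (t : ℝ) :
    (starRingEnd ℂ) ((t : ℂ) * Complex.exp (I * (Real.pi / 4)))
      = -I * ((t : ℂ) * Complex.exp (I * (Real.pi / 4))) := by
  rw [map_mul, Complex.conj_ofReal, ← Complex.exp_conj]
  have h : (starRingEnd ℂ) (I * (Real.pi / 4)) = I * (Real.pi / 4) + (-(Real.pi/2) : ℝ) * I := by
    rw [map_mul, Complex.conj_I, map_div₀, Complex.conj_ofReal, map_ofNat]
    push_cast
    ring
  rw [h, Complex.exp_add]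
  have h2 : Complex.exp ((-(Real.pi/2) : ℝ) * I) = -I := by
    rw [Complex.exp_mul_I]
    simp
  rw [h2]
  ring

/-- The kernel `R₀(x,y,k)` is real whenever `k = t e^{iπ/4}` with `t ∈ ℝ \ {0}`. -/
theorem stmt_5 (t : ℝ) (ht : t ≠ 0) (x y : ℝ) (hx : 0 ≤ x) (hy : 0 ≤ y) :
    (R0 x y ((t : ℂ) * Complex.exp (I * (Real.pi / 4)))).im = 0 := by
  set k : ℂ := (t : ℂ) * Complex.exp (I * (Real.pi / 4)) with hkdef
  have hck : (starRingEnd ℂ) k = -I * k := conj_k t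
  have hk0 : k ≠ 0 := by
    apply mul_ne_zero
    · exact_mod_cast ht
    · exact Complex.exp_ne_zero _
  rw [← Complex.conj_eq_iff_im]
  unfold R0
  have h1 : ∀ r : ℂ, (starRingEnd ℂ) r = r →
      (starRingEnd ℂ) (Complex.exp (I * k * r)) = Complex.exp (-k * r) := by
    intro r hr
    rw [← Complex.exp_conj, map_mul, map_mul, Complex.conj_I, hck, hr]
    congr 1
    linear_combination r * k * Complex.I_mul_I
  have h2 : ∀ r : ℂ, (starRingEnd ℂ) r = r →
      (starRingEnd ℂ) (Complex.exp (-k * r)) = Complex.exp (I * k * r) := by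
    intro r hr
    rw [← Complex.exp_conj, map_mul, map_neg, hck, hr]
    congr 1
    ring
  have hrs : (starRingEnd ℂ) ((x : ℂ) + y) = (x : ℂ) + y := by
    simp [Complex.conj_ofReal]
  have hra : (starRingEnd ℂ) ((|x - y| : ℝ) : ℂ) = ((|x - y| : ℝ) : ℂ) :=
    Complex.conj_ofReal _
  rw [map_mul, map_sub, map_add, map_sub, map_mul, map_mul, map_div₀, Complex.conj_I,
    map_mul, map_pow, map_ofNat, hck, h1 _ hra, h1 _ hrs, h2 _ hra, h2 _ hrs]
  have h3 : (-I * k) ^ 3 = I * k ^ 3 := by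
    linear_combination (-(I * k ^ 3)) * Complex.I_mul_I
  rw [h3]
  have hI2 : I ^ 2 = -1 := Complex.I_sq
  have hI3 : I ^ 3 = -I := by
    rw [pow_succ, hI2]; ring
  field_simp
  ring_nf
  simp only [hI2, hI3]
  ring
end

section
/- Let N : ℝ₊ → ℝ₊ be a non-decreasing function with N(t) = 0 for 0 ≤ t < ε for some ε > 0, and suppose I(r) = (1/r)∫₀^r N(t)/t dt converges to a limit L as r → ∞. Then N(r) = r(L + o(1)) as r → ∞, i.e. N(r)/r → L. -/
open MeasureTheory Filter Topology Set Real intervalIntegral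

/-! Since `N` is non-decreasing, `N r * log k ≤ ∫_r^{kr} N t / t dt ≤ N (k r) * log k` for `k > 1`.
Dividing by `r`, the middle term is `k I(kr) - I(r) → (k - 1) L`, so eventually
`N r / r` is at most about `(k - 1) L / log k ≤ k L`; comparing on `[r / k, r]` instead gives the
lower bound `L / k`. Letting `k → 1` squeezes `N r / r` to `L`. -/

noncomputable def integratedCount (N : ℝ → ℝ) (r : ℝ) : ℝ := ∫ t in (0 : ℝ)..r, N t / t

section

variable {N : ℝ → ℝ}

theorem MonotoneOn.intervalIntegrable_div_self (hN : MonotoneOn N (Ioi 0)) {a b : ℝ}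
    (ha : 0 < a) (hb : 0 < b) : IntervalIntegrable (fun t => N t / t) volume a b := by
  have hpos : uIcc a b ⊆ Ioi 0 := fun t ht => (lt_min ha hb).trans_le ht.1
  simp_rw [div_eq_mul_inv]
  exact (hN.mono hpos).intervalIntegrable.mul_continuousOn
    (continuousOn_inv₀.mono fun t ht => (hpos ht).ne')

theorem intervalIntegrable_div_self_of_eq_zero_near_zero (hN : MonotoneOn N (Ioi 0))
    {ε : ℝ} (hε : 0 < ε) (hzero : ∀ t : ℝ, 0 ≤ t → t < ε → N t = 0) {r : ℝ} (hr : 0 < r) :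
    IntervalIntegrable (fun t => N t / t) volume 0 r := by
  have hnear : IntervalIntegrable (fun t => N t / t) volume 0 ε := by
    refine (intervalIntegrable_const (c := (0 : ℝ))).congr_uIoo fun t ht => ?_
    rw [uIoo_of_le hε.le] at ht
    rw [hzero t ht.1.le ht.2, zero_div]
  exact hnear.trans (hN.intervalIntegrable_div_self hε hr)

theorem integratedCount_sub (hN : MonotoneOn N (Ioi 0)) {ε : ℝ} (hε : 0 < ε)
    (hzero : ∀ t : ℝ, 0 ≤ t → t < ε → N t = 0) {r s : ℝ} (hr : 0 < r) (hs : 0 < s) :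
    integratedCount N s - integratedCount N r = ∫ t in r..s, N t / t :=
  integral_interval_sub_left (intervalIntegrable_div_self_of_eq_zero_near_zero hN hε hzero hs)
    (intervalIntegrable_div_self_of_eq_zero_near_zero hN hε hzero hr)

theorem integratedCount_nonneg (hN : ∀ t : ℝ, 0 ≤ t → 0 ≤ N t) {r : ℝ} (hr : 0 ≤ r) :
    0 ≤ integratedCount N r :=
  integral_nonneg hr fun t ht => div_nonneg (hN t ht.1) ht.1

theorem integral_const_div_self (c : ℝ) {a b : ℝ} (ha : 0 < a) (hb : 0 < b) :
    ∫ t in a..b, c / t = c * log (b / a) := by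
  simp_rw [div_eq_mul_inv c, intervalIntegral.integral_const_mul,
    integral_inv (notMem_uIcc_of_lt ha hb)]

theorem mul_log_div_le_integral_div_self (hN : MonotoneOn N (Ioi 0)) {r s : ℝ} (hr : 0 < r)
    (hrs : r ≤ s) : N r * log (s / r) ≤ ∫ t in r..s, N t / t := by
  have hs := hr.trans_le hrs
  rw [← integral_const_div_self _ hr hs]
  refine integral_mono_on hrs (monotoneOn_const.intervalIntegrable_div_self hr hs)
    (hN.intervalIntegrable_div_self hr hs) fun t ht => ?_
  exact div_le_div_of_nonneg_right (hN hr (hr.trans_le ht.1) ht.1) (hr.trans_le ht.1).le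

theorem integral_div_self_le_mul_log_div (hN : MonotoneOn N (Ioi 0)) {r s : ℝ} (hr : 0 < r)
    (hrs : r ≤ s) : ∫ t in r..s, N t / t ≤ N s * log (s / r) := by
  have hs := hr.trans_le hrs
  rw [← integral_const_div_self _ hr hs]
  refine integral_mono_on hrs (hN.intervalIntegrable_div_self hr hs)
    (monotoneOn_const.intervalIntegrable_div_self hr hs) fun t ht => ?_
  exact div_le_div_of_nonneg_right (hN (hr.trans_le ht.1) hs ht.2) (hr.trans_le ht.1).le

theorem mul_log_le_integratedCount_sub (hN : MonotoneOn N (Ioi 0)) {ε : ℝ} (hε : 0 < ε)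
    (hzero : ∀ t : ℝ, 0 ≤ t → t < ε → N t = 0) {r k : ℝ} (hr : 0 < r) (hk : 1 ≤ k) :
    N r * log k ≤ integratedCount N (k * r) - integratedCount N r := by
  have hkr : r ≤ k * r := le_mul_of_one_le_left hr.le hk
  rw [integratedCount_sub hN hε hzero hr (hr.trans_le hkr)]
  simpa [hr.ne'] using mul_log_div_le_integral_div_self hN hr hkr

theorem integratedCount_sub_le_mul_log (hN : MonotoneOn N (Ioi 0)) {ε : ℝ} (hε : 0 < ε)
    (hzero : ∀ t : ℝ, 0 ≤ t → t < ε → N t = 0) {r k : ℝ} (hr : 0 < r) (hk : 1 ≤ k) :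
    integratedCount N r - integratedCount N (r / k) ≤ N r * log k := by
  have hrk : 0 < r / k := div_pos hr (one_pos.trans_le hk)
  rw [integratedCount_sub hN hε hzero hrk hr]
  simpa [hr.ne', (one_pos.trans_le hk).ne'] using
    integral_div_self_le_mul_log_div hN hrk (div_le_self hr.le hk)

theorem eventually_div_self_lt (hN : MonotoneOn N (Ioi 0)) {ε : ℝ} (hε : 0 < ε)
    (hzero : ∀ t : ℝ, 0 ≤ t → t < ε → N t = 0) {L : ℝ} (hL : 0 ≤ L)
    (hI : Tendsto (fun r => 1 / r * integratedCount N r) atTop (𝓝 L)) {c : ℝ} (hc : L < c) :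
    ∀ᶠ r in atTop, N r / r < c := by
  have hnear : ∀ᶠ k in 𝓝[>] (1 : ℝ), k * L < c :=
    nhdsWithin_le_nhds <| (tendsto_id.mul_const L).eventually (gt_mem_nhds (by simpa using hc))
  obtain ⟨k, hkc, hk1 : 1 < k⟩ := (hnear.and self_mem_nhdsWithin).exists
  have hk0 : 0 < k := one_pos.trans hk1
  have hlog : 0 < log k := log_pos hk1
  have hlim : Tendsto (fun r => (k * (1 / (k * r) * integratedCount N (k * r))
      - 1 / r * integratedCount N r) / log k) atTop (𝓝 ((k * L - L) / log k)) :=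
    (((hI.comp (tendsto_id.const_mul_atTop hk0)).const_mul k).sub hI).div_const _
  have hlimit_le : (k * L - L) / log k ≤ k * L := by
    rw [div_le_iff₀ hlog]
    calc k * L - L = L * (k * (1 - k⁻¹)) := by field_simp
      _ ≤ L * (k * log k) := by gcongr; exact one_sub_inv_le_log_of_pos hk0
      _ = k * L * log k := by ring
  filter_upwards [hlim.eventually_lt_const (hlimit_le.trans_lt hkc), eventually_gt_atTop 0]
    with r hr hr0
  refine lt_of_le_of_lt ?_ hr
  have hid : k * (1 / (k * r) * integratedCount N (k * r)) - 1 / r * integratedCount N r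
      = (integratedCount N (k * r) - integratedCount N r) / r := by field_simp
  rw [hid, le_div_iff₀ hlog, div_mul_eq_mul_div]
  exact div_le_div_of_nonneg_right (mul_log_le_integratedCount_sub hN hε hzero hr0 hk1.le) hr0.le

theorem eventually_lt_div_self (hN : MonotoneOn N (Ioi 0)) {ε : ℝ} (hε : 0 < ε)
    (hzero : ∀ t : ℝ, 0 ≤ t → t < ε → N t = 0) {L : ℝ} (hL : 0 ≤ L)
    (hI : Tendsto (fun r => 1 / r * integratedCount N r) atTop (𝓝 L)) {c : ℝ} (hc : c < L) :
    ∀ᶠ r in atTop, c < N r / r := by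
  have hnear : ∀ᶠ k in 𝓝[>] (1 : ℝ), c < L / k :=
    nhdsWithin_le_nhds <| (continuousAt_const.div continuousAt_id one_ne_zero).eventually
      (lt_mem_nhds (by simpa using hc))
  obtain ⟨k, hkc, hk1 : 1 < k⟩ := (hnear.and self_mem_nhdsWithin).exists
  have hk0 : 0 < k := one_pos.trans hk1
  have hlog : 0 < log k := log_pos hk1
  have hlim : Tendsto (fun r => (1 / r * integratedCount N r
      - 1 / k * (1 / (r / k) * integratedCount N (r / k))) / log k) atTop
      (𝓝 ((L - 1 / k * L) / log k)) :=
    (hI.sub ((hI.comp (tendsto_id.atTop_div_const hk0)).const_mul _)).div_const _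
  have hle_limit : L / k ≤ (L - 1 / k * L) / log k := by
    rw [le_div_iff₀ hlog]
    calc L / k * log k ≤ L / k * (k - 1) := by gcongr; exact log_le_sub_one_of_pos hk0
      _ = L - 1 / k * L := by field_simp
  filter_upwards [hlim.eventually_const_lt (hkc.trans_le hle_limit), eventually_gt_atTop 0]
    with r hr hr0
  refine hr.trans_le ?_
  have hid : 1 / r * integratedCount N r - 1 / k * (1 / (r / k) * integratedCount N (r / k))
      = (integratedCount N r - integratedCount N (r / k)) / r := by field_simp
  rw [hid, div_le_iff₀ hlog, div_mul_eq_mul_div]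
  exact div_le_div_of_nonneg_right (integratedCount_sub_le_mul_log hN hε hzero hr0 hk1.le) hr0.le

end

theorem stmt_11_general (N : ℝ → ℝ) (hmono : MonotoneOn N (Set.Ici 0))
    (ε : ℝ) (hε : 0 < ε) (hzero : ∀ t : ℝ, 0 ≤ t → t < ε → N t = 0)
    (L : ℝ)
    (hI : Tendsto (fun r : ℝ => (1 / r) * ∫ t in (0:ℝ)..r, N t / t) atTop (nhds L)) :
    Tendsto (fun r : ℝ => N r / r) atTop (nhds L) := by
  have hN : MonotoneOn N (Ioi 0) := hmono.mono Ioi_subset_Ici_self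
  have hN0 : ∀ t : ℝ, 0 ≤ t → 0 ≤ N t := fun t ht =>
    (hzero 0 le_rfl hε).symm.le.trans (hmono self_mem_Ici ht ht)
  have hL : 0 ≤ L := ge_of_tendsto hI <| (eventually_ge_atTop 0).mono fun r hr =>
    mul_nonneg (one_div_nonneg.2 hr) (integratedCount_nonneg hN0 hr)
  exact tendsto_order.2 ⟨fun c hc => eventually_lt_div_self hN hε hzero hL hI hc,
    fun c hc => eventually_div_self_lt hN hε hzero hL hI hc⟩

/-- Tauberian lemma (Levin, Lemma II.4.3): if `N` is non-decreasing and non-negative on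
`ℝ₊`, vanishes near `0`, and `I(r) = (1/r)∫₀^r N(t)/t dt → L` as `r → ∞`, then
`N(r)/r → L`. -/
theorem stmt_11 (N : ℝ → ℝ) (hmono : MonotoneOn N (Set.Ici 0))
    (hpos : ∀ t : ℝ, 0 ≤ t → 0 ≤ N t)
    (ε : ℝ) (hε : 0 < ε) (hzero : ∀ t : ℝ, 0 ≤ t → t < ε → N t = 0)
    (L : ℝ)
    (hI : Tendsto (fun r : ℝ => (1 / r) * ∫ t in (0:ℝ)..r, N t / t) atTop (nhds L)) :
    Tendsto (fun r : ℝ => N r / r) atTop (nhds L) :=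
  stmt_11_general N hmono ε hε hzero L hI
end
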